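/- arXiv:2004.05732 — 2 statements merged into one kernel-verified Lean document; each statement's English description precedes it below -/
import Mathlib

section
/- For any finite simple graph G, Σ_{(u,v)∈E(G)} min(deg(u), deg(v)) ≤ √2 · |E(G)|^{3/2}. -/
open Finset

lemma dart_sum_eq {V : Type*} [Fintype V] [DecidableEq V] (G : SimpleGraph V) [DecidableRel G.Adj] (f : Sym2 V → ℝ) :
    ∑ d : G.Dart, f d.edge = 2 * ∑ e ∈ G.edgeFinset, f e := by
  rw [← Finset.sum_fiberwise_of_maps_to (g := fun d : G.Dart => d.edge) (t := G.edgeFinset)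
    (fun d _ => by simp [SimpleGraph.mem_edgeFinset]) (fun d : G.Dart => f d.edge)]
  rw [Finset.mul_sum]
  refine Finset.sum_congr rfl fun e he => ?_
  rw [Finset.sum_congr rfl (fun d hd => by rw [(Finset.mem_filter.1 hd).2]),
    Finset.sum_const, nsmul_eq_mul]
  congr 1
  have := G.dart_edge_fiber_card e (SimpleGraph.mem_edgeFinset.1 he)
  norm_cast

lemma dart_sum_eq' {V : Type*} [Fintype V] (G : SimpleGraph V) [DecidableRel G.Adj] (g : V → V → ℝ) :
    ∑ d : G.Dart, g d.fst d.snd = ∑ v, ∑ w ∈ G.neighborFinset v, g v w := by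
  let e : (Σ v, G.neighborSet v) ≃ G.Dart :=
    { toFun := fun s => ⟨(s.fst, s.snd), s.snd.property⟩
      invFun := fun d => ⟨d.fst, d.snd, d.adj⟩
      left_inv := fun s => by ext <;> simp
      right_inv := fun d => by ext <;> simp }
  rw [← Fintype.sum_equiv e (fun s => g s.fst s.snd) (fun d => g d.fst d.snd) (fun s => rfl)]
  rw [← Finset.univ_sigma_univ, Finset.sum_sigma]
  refine Finset.sum_congr rfl fun v _ => ?_
  rw [← Finset.sum_coe_sort (G.neighborFinset v) (fun w => g v w)]
  apply Fintype.sum_equiv (Equiv.subtypeEquivRight (by simp)) <;> simp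

/-- For any finite simple graph `G`,
`Σ_{(u,v) ∈ E(G)} min(deg u, deg v) ≤ √2 · |E(G)|^{3/2}`. -/
theorem sum_min_degree_le {V : Type*} [Fintype V] [DecidableEq V]
    (G : SimpleGraph V) [DecidableRel G.Adj] :
    ∑ e ∈ G.edgeFinset,
        Sym2.lift ⟨fun u v => min (G.degree u : ℝ) (G.degree v : ℝ),
          fun u v => min_comm _ _⟩ e
      ≤ Real.sqrt 2 * (G.edgeFinset.card : ℝ) ^ ((3 : ℝ) / 2) := by
  set m : ℝ := (G.edgeFinset.card : ℝ) with hm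
  have hm0 : 0 ≤ m := Nat.cast_nonneg _
  set F : Sym2 V → ℝ := Sym2.lift ⟨fun u v => min (G.degree u : ℝ) (G.degree v : ℝ),
    fun u v => min_comm _ _⟩ with hF
  set D : Sym2 V → ℝ := Sym2.lift ⟨fun u v => (G.degree u : ℝ) * (G.degree v : ℝ),
    fun u v => mul_comm _ _⟩ with hD
  have hdeg : ∑ v, (G.degree v : ℝ) = 2 * m := by
    rw [hm]; norm_cast
    simpa using G.sum_degrees_eq_twice_card_edges
  -- Σ D ≤ 2 m²
  have hD2 : ∑ e ∈ G.edgeFinset, D e ≤ 2 * m ^ 2 := by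
    have h1 : 2 * ∑ e ∈ G.edgeFinset, D e
        = ∑ v, ∑ w ∈ G.neighborFinset v, (G.degree v : ℝ) * (G.degree w : ℝ) := by
      rw [← dart_sum_eq G, ← dart_sum_eq' G (fun v w => (G.degree v : ℝ) * (G.degree w : ℝ))]
      exact Fintype.sum_congr _ _ fun d => by
        rcases d with ⟨⟨a, b⟩, h⟩
        simp [hD, SimpleGraph.Dart.edge]
    have h2 : ∑ v, ∑ w ∈ G.neighborFinset v, (G.degree v : ℝ) * (G.degree w : ℝ)
        ≤ 2 * m * (2 * m) := by
      calc ∑ v, ∑ w ∈ G.neighborFinset v, (G.degree v : ℝ) * (G.degree w : ℝ)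
          ≤ ∑ v, (G.degree v : ℝ) * (2 * m) := by
            refine Finset.sum_le_sum fun v _ => ?_
            rw [← Finset.mul_sum]
            refine mul_le_mul_of_nonneg_left ?_ (Nat.cast_nonneg _)
            rw [← hdeg]
            exact Finset.sum_le_sum_of_subset_of_nonneg (Finset.subset_univ _)
              (fun _ _ _ => Nat.cast_nonneg _)
        _ = 2 * m * (2 * m) := by rw [← Finset.sum_mul, hdeg]
    linarith
  -- min² ≤ D pointwise
  have hFD : ∀ e ∈ G.edgeFinset, F e ^ 2 ≤ D e := by
    intro e _
    induction e with
    | _ u v =>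
      simp only [hF, hD, Sym2.lift_mk]
      rw [sq]
      exact mul_le_mul (min_le_left _ _) (min_le_right _ _)
        (le_min (Nat.cast_nonneg _) (Nat.cast_nonneg _)) (Nat.cast_nonneg _)
  -- Cauchy–Schwarz
  have hCS : (∑ e ∈ G.edgeFinset, F e) ^ 2 ≤ m * (2 * m ^ 2) := by
    have := sum_mul_sq_le_sq_mul_sq G.edgeFinset (fun _ => (1 : ℝ)) F
    simp only [one_mul, one_pow] at this
    calc (∑ e ∈ G.edgeFinset, F e) ^ 2
        ≤ (∑ _e ∈ G.edgeFinset, (1:ℝ)) * ∑ e ∈ G.edgeFinset, F e ^ 2 := this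
      _ ≤ m * (2 * m ^ 2) := by
          rw [Finset.sum_const, nsmul_eq_mul, mul_one]
          refine mul_le_mul_of_nonneg_left ?_ hm0
          exact le_trans (Finset.sum_le_sum hFD) hD2
  have hS0 : 0 ≤ ∑ e ∈ G.edgeFinset, F e := by
    refine Finset.sum_nonneg fun e _ => ?_
    induction e with
    | _ u v => simp only [hF, Sym2.lift_mk]; positivity
  calc ∑ e ∈ G.edgeFinset, F e
      = Real.sqrt ((∑ e ∈ G.edgeFinset, F e) ^ 2) := (Real.sqrt_sq hS0).symm
    _ ≤ Real.sqrt (m * (2 * m ^ 2)) := Real.sqrt_le_sqrt hCS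
    _ = Real.sqrt 2 * m ^ ((3 : ℝ) / 2) := by
        rw [show m * (2 * m ^ 2) = 2 * m ^ (3 : ℕ) by ring,
          Real.sqrt_mul (by norm_num)]
        congr 1
        rw [← Real.rpow_natCast m 3, Real.sqrt_eq_rpow, ← Real.rpow_mul hm0]
        norm_num
end

section
/- Consider the n-pyramid Δ_n colored with c ≥ 2 i.i.d. uniform colors, and let T_3(Δ_n) be the number of monochromatic triangles. Then (T_3(Δ_n) - n/c^2)/n converges in distribution, as n → ∞, to the two-point distribution taking value (1/c)(1 - 1/c) with probability 1/c and value -1/c^2 with probability 1 - 1/c. -/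
open Finset Filter

/-- The `n`-pyramid `Δₙ`: `n` triangles all sharing the common edge `(1,2)` and otherwise
disjoint. -/
def pyramid (n : ℕ) : SimpleGraph (Fin 2 ⊕ Fin n) :=
  SimpleGraph.fromRel fun x y => x.isLeft || y.isLeft

instance pyramidAdjDecidable (n : ℕ) : DecidableRel (pyramid n).Adj := fun x y =>
  decidable_of_iff _ (SimpleGraph.fromRel_adj _ x y).symm

/-- The number of monochromatic triangles of `G` under the coloring `X`. -/
def monochromaticTriangles {V : Type*} [Fintype V] [DecidableEq V] (G : SimpleGraph V)
    [DecidableRel G.Adj] {c : ℕ} (X : V → Fin c) : ℕ :=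
  ((G.cliqueFinset 3).filter fun t => ∀ u ∈ t, ∀ v ∈ t, X u = X v).card

/-!
Write the colouring as `(a, b, Y)`, with `a, b` the colours of the endpoints of the common edge and
`Y : Fin n → Fin c` the colours of the other vertices. If `a ≠ b` (a fraction `1 - 1/c` of all
colourings) there is no monochromatic triangle; if `a = b`, then `T₃(Δₙ)` is the number of `k`
with `Y k = a`. Since `∑_Y (c · #{k | Y k = a} - n)² = n (c - 1) cⁿ`, Chebyshev's inequality
shows that `#{k | Y k = a} / n` concentrates at `1/c`, which gives the two atoms of the limit.
-/

theorem card_filter_mul_sq_le_sum_sq {ι : Type*} (s : Finset ι) (x : ι → ℝ) {t : ℝ}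
    (ht : 0 ≤ t) :
    #{i ∈ s | t ≤ |x i|} * t ^ 2 ≤ ∑ i ∈ s, x i ^ 2 := by
  rw [← nsmul_eq_mul]
  calc _ ≤ ∑ i ∈ s with t ≤ |x i|, x i ^ 2 :=
        card_nsmul_le_sum _ _ _ fun i hi => by
          simpa only [sq_abs] using pow_le_pow_left₀ ht (mem_filter.mp hi).2 2
    _ ≤ _ := sum_le_sum_of_subset_of_nonneg (filter_subset _ s) fun i _ _ => sq_nonneg _

theorem abs_sum_comp_sub_card_mul_le {ι : Type*} (s : Finset ι) (g : ℝ → ℝ) (x : ι → ℝ)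
    {p δ ε M : ℝ} (hε : 0 ≤ ε) (hg : ∀ y, |y - p| < δ → |g y - g p| ≤ ε)
    (hM : ∀ y, |g y - g p| ≤ M) :
    |∑ i ∈ s, g (x i) - #s * g p| ≤ #s * ε + #{i ∈ s | δ ≤ |x i - p|} * M := by
  have hgood : ∑ i ∈ s with ¬δ ≤ |x i - p|, |g (x i) - g p| ≤ #s * ε :=
    calc _ ≤ #{i ∈ s | ¬δ ≤ |x i - p|} * ε := by
          simpa using sum_le_card_nsmul {i ∈ s | ¬δ ≤ |x i - p|} _ ε fun i hi =>
            hg _ (not_le.mp (mem_filter.mp hi).2)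
      _ ≤ #s * ε := by gcongr; exact filter_subset _ s
  have hbad :
      ∑ i ∈ s with δ ≤ |x i - p|, |g (x i) - g p| ≤ #{i ∈ s | δ ≤ |x i - p|} * M := by
    simpa using sum_le_card_nsmul {i ∈ s | δ ≤ |x i - p|} _ M fun i _ => hM _
  calc |∑ i ∈ s, g (x i) - #s * g p| = |∑ i ∈ s, (g (x i) - g p)| := by
        rw [sum_sub_distrib, sum_const, nsmul_eq_mul]
    _ ≤ ∑ i ∈ s, |g (x i) - g p| := abs_sum_le_sum_abs _ _
    _ ≤ _ := by
      rw [← sum_filter_add_sum_filter_not s fun i => δ ≤ |x i - p|]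
      linarith

section ColorCount

variable {κ : Type*} [Fintype κ] [DecidableEq κ]

theorem sum_card_mul_card_filter_sub_sq (a : κ) (n : ℕ) :
    ∑ Y : Fin n → κ, ((Fintype.card κ : ℝ) * #{k | Y k = a} - n) ^ 2 =
      n * (Fintype.card κ - 1) * Fintype.card κ ^ n := by
  set c : ℝ := (Fintype.card κ : ℝ)
  induction n with
  | zero => simp
  | succ n ih =>
    set e : κ → ℝ := fun v => c * (if v = a then 1 else 0) - 1
    have hcount (v : κ) (Y : Fin n → κ) :
        c * #{k | (Fin.cons v Y : Fin (n + 1) → κ) k = a} - (n + 1 : ℕ) =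
          e v + (c * #{k | Y k = a} - n) := by
      simp only [e, card_filter, Fin.sum_univ_succ, Fin.cons_zero, Fin.cons_succ]
      push_cast
      ring
    have he : ∑ v, e v = 0 := by simp [e, sum_sub_distrib, c]
    have he2 : ∑ v, e v ^ 2 = c * (c - 1) := by
      simp only [e, c, mul_ite, mul_one, mul_zero, sub_sq, ite_pow, ne_eq, OfNat.ofNat_ne_zero,
        not_false_eq_true, zero_pow, one_pow, sum_add_distrib, sum_sub_distrib, sum_ite_eq',
        mem_univ, ↓reduceIte, sum_const, card_univ, nsmul_eq_mul]
      ring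
    -- the new coordinate contributes the centred term `e v`, so the cross terms cancel by `he`
    rw [← (Fin.consEquiv fun _ => κ).sum_comp, Fintype.sum_prod_type]
    simp only [Fin.consEquiv_apply, hcount, add_sq, sum_add_distrib, ← mul_sum, ← sum_mul, ih,
      sum_const, card_univ, Fintype.card_fun, Fintype.card_fin, nsmul_eq_mul, he, he2]
    push_cast
    ring

theorem card_large_deviation_le [Nonempty κ] (a : κ) {n : ℕ} (hn : n ≠ 0) {δ : ℝ}
    (hδ : 0 < δ) :
    (#{Y : Fin n → κ | δ ≤ |(#{k | Y k = a} : ℝ) / n - 1 / Fintype.card κ|} : ℝ) ≤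
      (Fintype.card κ - 1) * Fintype.card κ ^ n / (Fintype.card κ ^ 2 * n * δ ^ 2) := by
  set c : ℝ := (Fintype.card κ : ℝ)
  have hc : 0 < c := by simp [c, Fintype.card_pos]
  have hn' : (0 : ℝ) < n := by positivity
  have hdev (Y : Fin n → κ) :
      |c * #{k | Y k = a} - n| = c * n * |(#{k | Y k = a} : ℝ) / n - 1 / c| := by
    rw [← abs_of_pos (by positivity : 0 < c * n), ← abs_mul]
    congr 1
    field_simp
  have hset : #{Y : Fin n → κ | δ ≤ |(#{k | Y k = a} : ℝ) / n - 1 / c|} =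
      #{Y : Fin n → κ | c * n * δ ≤ |c * #{k | Y k = a} - n|} :=
    congrArg card <| filter_congr fun Y _ => by rw [hdev, mul_le_mul_iff_right₀ (by positivity)]
  have hcheb := card_filter_mul_sq_le_sum_sq univ (fun Y : Fin n → κ => c * #{k | Y k = a} - n)
    (t := c * n * δ) (by positivity)
  rw [← hset, sum_card_mul_card_filter_sub_sq] at hcheb
  change _ ≤ n * (c - 1) * c ^ n at hcheb
  rw [le_div_iff₀ (by positivity)]
  refine le_of_mul_le_mul_right ?_ hn'
  linear_combination hcheb

theorem tendsto_sum_comp_card_filter_div (a : κ) {g : ℝ → ℝ}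
    (hg : ContinuousAt g (1 / Fintype.card κ)) {M : ℝ} (hM : ∀ y, |g y| ≤ M) :
    Tendsto (fun n : ℕ => (∑ Y : Fin n → κ, g (#{k | Y k = a} / n)) / Fintype.card κ ^ n)
      atTop (nhds (g (1 / Fintype.card κ))) := by
  have : Nonempty κ := ⟨a⟩
  set c : ℝ := (Fintype.card κ : ℝ)
  have hc : 0 < c := by simp [c, Fintype.card_pos]
  rw [Metric.tendsto_nhds]
  intro ε hε
  obtain ⟨δ, hδ, hgδ⟩ := Metric.continuousAt_iff.mp hg (ε / 2) (half_pos hε)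
  -- `C / n` bounds the weight of the colourings `Y` with `|#{k | Y k = a} / n - 1/c| ≥ δ`
  set C := (c - 1) / (c ^ 2 * δ ^ 2) * (2 * M)
  filter_upwards [(tendsto_const_div_atTop_nhds_zero_nat C).eventually (gt_mem_nhds (half_pos hε)),
    eventually_ne_atTop 0] with n hCn hn
  have hcn : 0 < c ^ n := pow_pos hc n
  have hbound := abs_sum_comp_sub_card_mul_le univ g (fun Y : Fin n → κ => #{k | Y k = a} / n)
    (half_pos hε).le (fun y hy => (hgδ (by rwa [Real.dist_eq])).le) (M := 2 * M) fun y =>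
      (abs_sub _ _).trans (by linarith [hM y, hM (1 / c)])
  have hbad :
      (#{Y : Fin n → κ | δ ≤ |(#{k | Y k = a} : ℝ) / n - 1 / c|} : ℝ) * (2 * M) ≤
        c ^ n * (C / n) :=
    calc _ ≤ (c - 1) * c ^ n / (c ^ 2 * n * δ ^ 2) * (2 * M) := by
          gcongr
          · linarith [abs_nonneg (g 0), hM 0]
          · exact card_large_deviation_le a hn hδ
      _ = c ^ n * (C / n) := by simp only [C]; field_simp
  have hdiff : (∑ Y : Fin n → κ, g (#{k | Y k = a} / n)) / c ^ n - g (1 / c) =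
      (∑ Y : Fin n → κ, g (#{k | Y k = a} / n) - c ^ n * g (1 / c)) / c ^ n := by
    field_simp
  simp only [card_univ, Fintype.card_fun, Fintype.card_fin, Nat.cast_pow] at hbound
  rw [Real.dist_eq, hdiff, abs_div, abs_of_pos hcn, div_lt_iff₀ hcn]
  linarith [mul_lt_mul_of_pos_left hCn hcn]

end ColorCount

theorem pyramid_adj {n : ℕ} {x y : Fin 2 ⊕ Fin n} :
    (pyramid n).Adj x y ↔ x ≠ y ∧ (x.isLeft ∨ y.isLeft) := by
  simp [pyramid, or_comm]

/-- A triangle meets `Fin 2` in at most two vertices and `Fin n` in at most one, since vertices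
of `Fin n` are pairwise non-adjacent. -/
theorem pyramid_isNClique_three_iff {n : ℕ} {s : Finset (Fin 2 ⊕ Fin n)} :
    (pyramid n).IsNClique 3 s ↔ ∃ k, s = {.inl 0, .inl 1, .inr k} := by
  constructor
  · intro hs
    obtain ⟨k, hk⟩ : ∃ k, Sum.inr k ∈ s := by
      by_contra! h
      have : s ⊆ {.inl 0, .inl 1} := fun
        | .inl i, _ => by fin_cases i <;> simp
        | .inr j, hj => absurd hj (h j)
      have := (card_le_card this).trans card_le_two
      rw [hs.card_eq] at this
      omega
    refine ⟨k, eq_of_subset_of_card_le (fun v hv => ?_) (hs.card_eq ▸ card_le_three)⟩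
    rcases v with i | j
    · fin_cases i <;> simp
    · by_cases hjk : j = k
      · simp [hjk]
      · simpa using (pyramid_adj.mp (hs.isClique hv hk (by simpa using hjk))).2
  · rintro ⟨k, rfl⟩
    simp [SimpleGraph.is3Clique_triple_iff, pyramid_adj]

theorem monochromaticTriangles_pyramid {n c : ℕ} (X : Fin 2 ⊕ Fin n → Fin c) :
    monochromaticTriangles (pyramid n) X =
      #{k | X (.inl 0) = X (.inl 1) ∧ X (.inr k) = X (.inl 0)} := by
  set triangle : Fin n → Finset (Fin 2 ⊕ Fin n) := fun k => {.inl 0, .inl 1, .inr k}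
  have htriangle : triangle.Injective := fun j k h => by
    simpa [triangle] using h.subset (show .inr j ∈ triangle j by simp [triangle])
  have hcliques : (pyramid n).cliqueFinset 3 = univ.image triangle := by
    ext s
    simp [pyramid_isNClique_three_iff, triangle, eq_comm]
  rw [monochromaticTriangles, hcliques, filter_image, card_image_of_injective _ htriangle]
  congr 1
  ext k
  simp only [triangle, mem_filter, mem_univ, true_and, forall_mem_insert]
  grind

theorem sum_comp_monochromaticTriangles_pyramid {M : Type*} [AddCommMonoid M] (n c : ℕ)
    (F : ℕ → M) :
    ∑ X : Fin 2 ⊕ Fin n → Fin c, F (monochromaticTriangles (pyramid n) X) =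
      ∑ a : Fin c, ∑ Y : Fin n → Fin c, F #{k | Y k = a} + (c * (c - 1) * c ^ n) • F 0 := by
  rw [← (Equiv.sumArrowEquivProdArrow _ _ _).symm.sum_comp, Fintype.sum_prod_type,
    ← (finTwoArrowEquiv _).symm.sum_comp, Fintype.sum_prod_type]
  have hrow (a : Fin c) : ∑ b : Fin c, ∑ Y : Fin n → Fin c, F #{k | a = b ∧ Y k = a} =
      ∑ Y : Fin n → Fin c, F #{k | Y k = a} + ((c - 1) * c ^ n) • F 0 := by
    have hoff : ∀ b ∈ ({a}ᶜ : Finset (Fin c)),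
        ∑ Y : Fin n → Fin c, F #{k | a = b ∧ Y k = a} = c ^ n • F 0 := fun b hb => by
      simp [Ne.symm (by simpa using hb : b ≠ a)]
    rw [Fintype.sum_eq_add_sum_compl a, sum_congr rfl hoff, sum_const, card_compl, card_singleton,
      smul_smul]
    simp
  simp [monochromaticTriangles_pyramid, hrow, sum_add_distrib, smul_smul, mul_assoc]

/-- Under uniformly random `c`-coloring (`c ≥ 2`) of the `n`-pyramid `Δₙ`,
`(T₃(Δₙ) - n/c²)/n` converges in distribution, as `n → ∞`, to the two-point distribution taking
the value `(1/c)(1 - 1/c)` with probability `1/c` and the value `-1/c²` with probability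
`1 - 1/c`: for every bounded continuous test function `f`, the expectations converge. -/
theorem pyramid_nonnormal_limit (c : ℕ) (hc : 2 ≤ c) (f : BoundedContinuousFunction ℝ ℝ) :
    Tendsto
      (fun n : ℕ =>
        (∑ X : (Fin 2 ⊕ Fin n) → Fin c,
            f (((monochromaticTriangles (pyramid n) X : ℝ) - n / (c : ℝ) ^ 2) / n))
          / (c : ℝ) ^ (n + 2))
      atTop
      (nhds ((1 / c) * f ((1 / c) * (1 - 1 / c)) + (1 - 1 / c) * f (-1 / (c : ℝ) ^ 2))) := by
  set g : ℝ → ℝ := fun x => f (x - 1 / (c : ℝ) ^ 2)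
  have hg (a : Fin c) :
      Tendsto (fun n : ℕ => (∑ Y : Fin n → Fin c, g (#{k | Y k = a} / n)) / c ^ n) atTop
        (nhds (g (1 / c))) := by
    simpa using tendsto_sum_comp_card_filter_div a
      (f.continuous.comp (continuous_sub_right _)).continuousAt fun _ => f.norm_coe_le_norm _
  have hlim := ((tendsto_finsetSum univ fun a _ => hg a).const_mul (1 / (c : ℝ) ^ 2)).add_const
    ((1 - 1 / (c : ℝ)) * f (-1 / (c : ℝ) ^ 2))
  refine Tendsto.congr' ?_ (hlim.trans_eq ?_)
  · filter_upwards [eventually_ne_atTop 0] with n hn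
    have hF (t : ℝ) : f ((t - n / (c : ℝ) ^ 2) / n) = g (t / n) := by
      simp only [g]
      congr 1
      field_simp
    have hsum :=
      sum_comp_monochromaticTriangles_pyramid n c fun t => f ((t - n / (c : ℝ) ^ 2) / n)
    have hg0 : g ((0 : ℕ) / n) = f (-1 / (c : ℝ) ^ 2) := by simp [g, neg_div]
    simp only [hF] at hsum ⊢
    rw [hsum, hg0, ← sum_div, nsmul_eq_mul]
    push_cast [Nat.cast_sub (by omega : 1 ≤ c)]
    field_simp
    ring
  · simp only [g, sum_const, card_univ, Fintype.card_fin, nsmul_eq_mul]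
    field_simp
end
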